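/- The series Σ_{k=1}^∞ 12H_k²/((k+1)(k+2)(k+3)) converges to π²/2 − 9/4, and the series Σ_{k=1}^∞ 12H̄_k/((k+1)(k+2)(k+3)) converges to π²/2 − 15/4. -/
import Mathlib


open Finset Filter Topology

/-- `n`-th harmonic number. -/
noncomputable def H (n : ℕ) : ℝ := ∑ k ∈ Finset.Icc 1 n, (1 : ℝ) / k

/-- Second-order harmonic number. -/
noncomputable def Hbar (n : ℕ) : ℝ := ∑ k ∈ Finset.Icc 1 n, (1 : ℝ) / (k : ℝ) ^ 2

lemma H_succ (n : ℕ) : H (n + 1) = H n + 1 / ((n : ℝ) + 1) := by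
  unfold H
  rw [Finset.sum_Icc_succ_top (by omega)]
  push_cast; ring

lemma Hbar_succ (n : ℕ) : Hbar (n + 1) = Hbar n + 1 / ((n : ℝ) + 1) ^ 2 := by
  unfold Hbar
  rw [Finset.sum_Icc_succ_top (by omega)]
  push_cast; ring

lemma H_nonneg (n : ℕ) : 0 ≤ H n := Finset.sum_nonneg fun k _ => by positivity

lemma Hbar_nonneg (n : ℕ) : 0 ≤ Hbar n := Finset.sum_nonneg fun k _ => by positivity

lemma H_le (n : ℕ) : H n ≤ n := by
  induction n with
  | zero => simp [H]
  | succ n ih =>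
      rw [H_succ]
      have h1 : (0:ℝ) < (n:ℝ) + 1 := by positivity
      have : 1 / ((n:ℝ) + 1) ≤ 1 := by
        rw [div_le_one h1]; linarith
      push_cast; linarith

lemma H_le_sqrt (n : ℕ) : H n ≤ 2 * Real.sqrt n := by
  induction n with
  | zero => simp [H]
  | succ n ih =>
      rw [H_succ]
      push_cast
      set a := Real.sqrt n with ha0
      set b := Real.sqrt ((n : ℝ) + 1) with hb0
      have ha : a ^ 2 = n := Real.sq_sqrt (by positivity)
      have hb : b ^ 2 = (n : ℝ) + 1 := Real.sq_sqrt (by positivity)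
      have hab : a ≤ b := Real.sqrt_le_sqrt (by linarith)
      have ha' : 0 ≤ a := Real.sqrt_nonneg _
      have hb' : 0 ≤ b := Real.sqrt_nonneg _
      have h1 : (0:ℝ) < (n:ℝ) + 1 := by positivity
      have key : 1 / ((n:ℝ) + 1) ≤ 2 * b - 2 * a := by
        rw [div_le_iff₀ h1]
        nlinarith [sq_nonneg (a - 1), sq_nonneg (b - 1), mul_nonneg (sub_nonneg.2 hab) ha']
      linarith

lemma H_sq_le (n : ℕ) : (H n) ^ 2 ≤ 4 * n := by
  have h := H_le_sqrt n
  have h0 := H_nonneg n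
  have hs : (Real.sqrt n) ^ 2 = n := Real.sq_sqrt (by positivity)
  nlinarith [Real.sqrt_nonneg (n : ℝ)]

lemma key1 (n : ℕ) :
    ∑ k ∈ range n, 12 * (H (k + 1)) ^ 2 / (((k : ℝ) + 2) * ((k : ℝ) + 3) * ((k : ℝ) + 4))
      = 3 * Hbar n - 6 * (H n) ^ 2 / (((n:ℝ)+2)*((n:ℝ)+3))
        - 6 * H n / (((n:ℝ)+1)*((n:ℝ)+2))
        + 3*(2*(n:ℝ)+3)/(2*((n:ℝ)+1)*((n:ℝ)+2)) - 9/4 := by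
  induction n with
  | zero => simp [H, Hbar]; norm_num
  | succ n ih =>
      rw [Finset.sum_range_succ, ih, H_succ, Hbar_succ]
      have h1 : ((n:ℝ)+1) ≠ 0 := by positivity
      have h2 : ((n:ℝ)+2) ≠ 0 := by positivity
      have h3 : ((n:ℝ)+3) ≠ 0 := by positivity
      have h4 : ((n:ℝ)+4) ≠ 0 := by positivity
      push_cast
      field_simp
      ring

lemma key2 (n : ℕ) :
    ∑ k ∈ range n, 12 * Hbar (k + 1) / (((k : ℝ) + 2) * ((k : ℝ) + 3) * ((k : ℝ) + 4))
      = 3 * Hbar n - 6 * Hbar n / (((n:ℝ)+2)*((n:ℝ)+3))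
        + 3*(2*(n:ℝ)+5)/(2*((n:ℝ)+1)*((n:ℝ)+2)) - 15/4 := by
  induction n with
  | zero => simp [Hbar]; norm_num
  | succ n ih =>
      rw [Finset.sum_range_succ, ih, Hbar_succ]
      have h1 : ((n:ℝ)+1) ≠ 0 := by positivity
      have h2 : ((n:ℝ)+2) ≠ 0 := by positivity
      have h3 : ((n:ℝ)+3) ≠ 0 := by positivity
      have h4 : ((n:ℝ)+4) ≠ 0 := by positivity
      push_cast
      field_simp
      ring

lemma Hbar_eq_range (n : ℕ) : Hbar n = ∑ k ∈ range (n + 1), (1 : ℝ) / (k : ℝ) ^ 2 := by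
  induction n with
  | zero => simp [Hbar]
  | succ n ih =>
      rw [Hbar_succ, ih,
        Finset.sum_range_succ (f := fun k => (1:ℝ)/(k:ℝ)^2) (n := n + 1)]
      push_cast; ring

lemma Hbar_tendsto : Tendsto Hbar atTop (𝓝 (Real.pi ^ 2 / 6)) := by
  have h := hasSum_zeta_two.tendsto_sum_nat
  have h2 : Tendsto (fun n : ℕ => ∑ k ∈ range (n + 1), (1 : ℝ) / (k : ℝ) ^ 2)
      atTop (𝓝 (Real.pi ^ 2 / 6)) := h.comp (tendsto_add_atTop_nat 1)
  exact h2.congr fun n => (Hbar_eq_range n).symm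

lemma Hbar_le (n : ℕ) : Hbar n ≤ Real.pi ^ 2 / 6 := by
  have hmono : Monotone Hbar := by
    apply monotone_nat_of_le_succ
    intro n
    rw [Hbar_succ]
    have : (0:ℝ) ≤ 1 / ((n:ℝ)+1)^2 := by positivity
    linarith
  exact hmono.ge_of_tendsto Hbar_tendsto n

lemma aux_tendsto (c : ℝ) : Tendsto (fun n : ℕ => c / ((n:ℝ) + 2)) atTop (𝓝 0) := by
  apply Tendsto.div_atTop (tendsto_const_nhds)
  exact tendsto_atTop_add_const_right _ 2 tendsto_natCast_atTop_atTop

theorem sum_H_sq_and_Hbar_over_three_factors :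
    HasSum (fun k : ℕ =>
        12 * (H (k + 1)) ^ 2 / (((k : ℝ) + 2) * ((k : ℝ) + 3) * ((k : ℝ) + 4)))
      (Real.pi ^ 2 / 2 - 9 / 4) ∧
    HasSum (fun k : ℕ =>
        12 * Hbar (k + 1) / (((k : ℝ) + 2) * ((k : ℝ) + 3) * ((k : ℝ) + 4)))
      (Real.pi ^ 2 / 2 - 15 / 4) := by
  have hA : Tendsto (fun n : ℕ => 6 * (H n) ^ 2 / (((n:ℝ)+2)*((n:ℝ)+3))) atTop (𝓝 0) := by
    apply squeeze_zero (fun n => by positivity) (g := fun n : ℕ => 24 / ((n:ℝ) + 2))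
    · intro n
      rw [div_le_div_iff₀ (by positivity) (by positivity)]
      have h := H_sq_le n
      have hn : (0:ℝ) ≤ (n:ℝ) := by positivity
      nlinarith
    · exact aux_tendsto 24
  have hB : Tendsto (fun n : ℕ => 6 * H n / (((n:ℝ)+1)*((n:ℝ)+2))) atTop (𝓝 0) := by
    apply squeeze_zero (fun n => div_nonneg (by have := H_nonneg n; linarith) (by positivity))
      (g := fun n : ℕ => 6 / ((n:ℝ) + 2))
    · intro n
      rw [div_le_div_iff₀ (by positivity) (by positivity)]
      have h := H_le n
      have h0 := H_nonneg n
      have hn : (0:ℝ) ≤ (n:ℝ) := by positivity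
      nlinarith
    · exact aux_tendsto 6
  have hC : ∀ c : ℝ, 0 ≤ c → Tendsto (fun n : ℕ =>
      3*(2*(n:ℝ)+c)/(2*((n:ℝ)+1)*((n:ℝ)+2))) atTop (𝓝 0) := by
    intro c hc
    apply squeeze_zero (fun n => by positivity) (g := fun n : ℕ => (3 + 3*c) / ((n:ℝ) + 2))
    · intro n
      rw [div_le_div_iff₀ (by positivity) (by positivity)]
      have hn : (0:ℝ) ≤ (n:ℝ) := by positivity
      nlinarith [mul_nonneg hc hn, mul_nonneg (mul_nonneg hc hn) hn, mul_nonneg hn hn]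
    · exact aux_tendsto _
  have hD : Tendsto (fun n : ℕ => 6 * Hbar n / (((n:ℝ)+2)*((n:ℝ)+3))) atTop (𝓝 0) := by
    apply squeeze_zero (fun n => div_nonneg (by have := Hbar_nonneg n; linarith) (by positivity))
      (g := fun n : ℕ => Real.pi ^ 2 / ((n:ℝ) + 2))
    · intro n
      rw [div_le_div_iff₀ (by positivity) (by positivity)]
      have h := Hbar_le n
      have h0 := Hbar_nonneg n
      have hn : (0:ℝ) ≤ (n:ℝ) := by positivity
      have h2 : Hbar n * ((n:ℝ)+2) ≤ Real.pi ^ 2 / 6 * ((n:ℝ)+2) :=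
        mul_le_mul_of_nonneg_right h (by positivity)
      nlinarith [sq_nonneg Real.pi, mul_nonneg (sq_nonneg Real.pi) hn]
    · exact aux_tendsto _
  have hHb := Hbar_tendsto
  constructor
  · rw [hasSum_iff_tendsto_nat_of_nonneg (fun k => by positivity)]
    have T : Tendsto (fun n : ℕ => 3 * Hbar n - 6 * (H n) ^ 2 / (((n:ℝ)+2)*((n:ℝ)+3))
        - 6 * H n / (((n:ℝ)+1)*((n:ℝ)+2))
        + 3*(2*(n:ℝ)+3)/(2*((n:ℝ)+1)*((n:ℝ)+2)) - 9/4) atTop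
        (𝓝 (3 * (Real.pi ^ 2 / 6) - 0 - 0 + 0 - 9/4)) :=
      ((((hHb.const_mul 3).sub hA).sub hB).add (hC 3 (by norm_num))).sub tendsto_const_nhds
    simp only [key1]
    convert T using 2
    ring
  · rw [hasSum_iff_tendsto_nat_of_nonneg (fun k => div_nonneg (by have := Hbar_nonneg (k+1); linarith) (by positivity))]
    have T : Tendsto (fun n : ℕ => 3 * Hbar n - 6 * Hbar n / (((n:ℝ)+2)*((n:ℝ)+3))
        + 3*(2*(n:ℝ)+5)/(2*((n:ℝ)+1)*((n:ℝ)+2)) - 15/4) atTop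
        (𝓝 (3 * (Real.pi ^ 2 / 6) - 0 + 0 - 15/4)) :=
      (((hHb.const_mul 3).sub hD).add (hC 5 (by norm_num))).sub tendsto_const_nhds
    simp only [key2]
    convert T using 2
    ring
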